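/- arXiv:2407.03094 — 2 statements merged into one kernel-verified Lean document; each statement's English description precedes it below -/
import Mathlib

section
/- (Exchangeability coverage bound) Let S_1, …, S_{n+1} be exchangeable real random variables and α ∈ (0,1). Let q̂ be the ⌈(1-α)(n+1)⌉-th order statistic of S_1, …, S_n (with q̂ = ∞ if ⌈(1-α)(n+1)⌉ > n). Then P(S_{n+1} ≤ q̂) ≥ 1 - α. -/
open MeasureTheory Finset ENNReal

/-! Call coordinate `j` of a score vector low if fewer than `k` coordinates lie strictly below
it. When `k ≤ n + 1`, at least `k` of the `n + 1` coordinates are low, so the probabilities of the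
events "coordinate `j` is low" sum to at least `k`. Exchangeability makes these probabilities
equal, so the test score is low with probability at least `k / (n + 1) ≥ 1 - α`, and a low test
score is at most the `k`-th smallest calibration score. -/

def strictRank {ι α : Type*} [Fintype ι] [LT α] [DecidableLT α] (v : ι → α) (j : ι) : ℕ :=
  #{i | v i < v j}

section Rank

variable {ι α : Type*} [Fintype ι] [LinearOrder α]

theorem strictRank_comp_perm (σ : Equiv.Perm ι) (v : ι → α) (j : ι) :
    strictRank (v ∘ σ) j = strictRank v (σ j) := by
  simp only [strictRank, card_filter, Function.comp_apply]
  exact Equiv.sum_comp σ (fun i => if v i < v (σ j) then 1 else 0)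

theorem le_card_filter_strictRank_lt (v : ι → α) {k : ℕ} (hk : k ≤ Fintype.card ι) :
    k ≤ #{j | strictRank v j < k} := by
  classical
  set B : Finset ι := {j | strictRank v j < k}
  by_contra! hB
  -- a smallest coordinate outside `B` has only coordinates of `B` strictly below it
  obtain ⟨j₀, hj₀, hmin⟩ := exists_min_image (univ \ B) v <| sdiff_nonempty.mpr fun hsub => by
    have := card_le_card hsub
    rw [card_univ] at this
    omega
  have hbelow : ({i | v i < v j₀} : Finset ι) ⊆ B := fun i hi => by
    by_contra hiB
    exact (mem_filter.mp hi).2.not_ge (hmin i (mem_sdiff.mpr ⟨mem_univ i, hiB⟩))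
  have hrank : strictRank v j₀ < k := (card_le_card hbelow).trans_lt hB
  exact (mem_sdiff.mp hj₀).2 (mem_filter.mpr ⟨mem_univ j₀, hrank⟩)

end Rank

theorem measurable_strictRank {ι α : Type*} [Fintype ι] [LinearOrder α] [TopologicalSpace α]
    [OrderClosedTopology α] [SecondCountableTopology α] [MeasurableSpace α] [OpensMeasurableSpace α]
    (j : ι) : Measurable fun v : ι → α => strictRank v j := by
  simp only [strictRank, card_filter]
  refine Finset.measurable_sum _ fun i _ => Measurable.ite ?_ measurable_const measurable_const
  exact measurableSet_lt (measurable_pi_apply i) (measurable_pi_apply j)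

section Exchangeable

variable {ι : Type*} [Fintype ι] {ν : Measure (ι → ℝ)}

theorem measure_strictRank_lt_eq (hν : ∀ σ : Equiv.Perm ι, ν.map (· ∘ σ) = ν)
    (k : ℕ) (j j' : ι) :
    ν {v | strictRank v j < k} = ν {v | strictRank v j' < k} := by
  classical
  have hpre : {v : ι → ℝ | strictRank v j < k}
      = (· ∘ Equiv.swap j j') ⁻¹' {v | strictRank v j' < k} := by
    ext v
    simp [strictRank_comp_perm]
  have hmeas : MeasurableSet {v : ι → ℝ | strictRank v j' < k} :=
    measurable_strictRank j' measurableSet_Iio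
  have hσ : Measurable fun v : ι → ℝ => v ∘ Equiv.swap j j' := by fun_prop
  rw [hpre, ← Measure.map_apply hσ hmeas, hν]

theorem natCast_mul_le_sum_measure_strictRank_lt (k : ℕ) (hk : k ≤ Fintype.card ι) :
    k * ν Set.univ ≤ ∑ j, ν {v | strictRank v j < k} := by
  have hmeas : ∀ j, MeasurableSet {v : ι → ℝ | strictRank v j < k} :=
    fun j => (measurable_strictRank j) measurableSet_Iio
  calc (k : ℝ≥0∞) * ν Set.univ = ∫⁻ _, (k : ℝ≥0∞) ∂ν := by simp
    _ ≤ ∫⁻ v, ∑ j, {v | strictRank v j < k}.indicator 1 v ∂ν := by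
      refine lintegral_mono fun v => ?_
      simp only [Set.indicator_apply, Set.mem_ofPred_eq, Pi.one_apply, sum_boole]
      exact_mod_cast le_card_filter_strictRank_lt v hk
    _ = ∑ j, ν {v | strictRank v j < k} := by
      rw [lintegral_finsetSum _ fun j _ => measurable_one.indicator (hmeas j)]
      simp only [lintegral_indicator_one (hmeas _)]

theorem natCast_div_card_le_measure_strictRank_lt [IsProbabilityMeasure ν]
    (hν : ∀ σ : Equiv.Perm ι, ν.map (· ∘ σ) = ν) {k : ℕ} (hk : k ≤ Fintype.card ι) (j : ι) :
    (k : ℝ≥0∞) / Fintype.card ι ≤ ν {v | strictRank v j < k} := by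
  have hcard : (Fintype.card ι : ℝ≥0∞) ≠ 0 := by
    simpa using (Fintype.card_pos_iff.mpr ⟨j⟩).ne'
  rw [ENNReal.div_le_iff_le_mul (Or.inl hcard) (Or.inl (natCast_ne_top _)), mul_comm]
  calc (k : ℝ≥0∞) = k * ν Set.univ := by simp
    _ ≤ ∑ j, ν {v | strictRank v j < k} := natCast_mul_le_sum_measure_strictRank_lt k hk
    _ = Fintype.card ι * ν {v | strictRank v j < k} := by
      simp [measure_strictRank_lt_eq hν k _ j]

end Exchangeable

theorem le_sInf_of_strictRank_last_lt {α : Type*} [ConditionallyCompleteLinearOrder α]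
    {n k : ℕ} (v : Fin (n + 1) → α) (hkn : k ≤ n) (hv : strictRank v (Fin.last n) < k) :
    v (Fin.last n) ≤ sInf {t | k ≤ #{i : Fin n | v i.castSucc ≤ t}} := by
  refine le_csInf ?_ fun t ht => ?_
  · obtain ⟨t, ht⟩ := Finite.exists_le fun i : Fin n => v i.castSucc
    exact ⟨t, by simpa [filter_true_of_mem fun i _ => ht i] using hkn⟩
  · by_contra! hlt
    have hmaps : ∀ i ∈ ({i : Fin n | v i.castSucc ≤ t} : Finset _),
        i.castSucc ∈ ({i | v i < v (Fin.last n)} : Finset _) := fun i hi => by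
      simp only [mem_filter, mem_univ, true_and] at hi ⊢
      exact hi.trans_lt hlt
    have := card_le_card_of_injOn _ hmaps (Fin.castSucc_injective n).injOn
    exact (ht.trans this).not_gt hv

theorem ofReal_le_natCast_div_of_natCast_eq_ceil {x : ℝ} {k m : ℕ} (hm : 0 < m)
    (hk : (k : ℝ) = ⌈x * m⌉) : ENNReal.ofReal x ≤ k / m := by
  rw [← ENNReal.ofReal_natCast k, ← ENNReal.ofReal_natCast m,
    ← ENNReal.ofReal_div_of_pos (by positivity)]
  refine ENNReal.ofReal_le_ofReal ?_
  rw [le_div_iff₀ (by positivity), hk]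
  exact Int.le_ceil _

/-- Finite-sample coverage of split conformal prediction under exchangeability:
with `q̂` the `⌈(1-α)(n+1)⌉`-th order statistic of the first `n` scores (`∞`, i.e. the
event holds trivially, if `⌈(1-α)(n+1)⌉ > n`), one has `P(S_{n+1} ≤ q̂) ≥ 1 - α`. -/
theorem exchangeability_coverage
    {Ω : Type*} [MeasurableSpace Ω] (μ : Measure Ω) [IsProbabilityMeasure μ]
    (n : ℕ) (S : Fin (n + 1) → Ω → ℝ) (hS : ∀ i, Measurable (S i))
    (hexch : ∀ σ : Equiv.Perm (Fin (n + 1)),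
        Measure.map (fun ω => fun i => S (σ i) ω) μ = Measure.map (fun ω => fun i => S i ω) μ)
    (α : ℝ) (hα : α ∈ Set.Ioo (0:ℝ) 1)
    -- `k` is the rank ⌈(1-α)(n+1)⌉ and `qhat ω` the k-th smallest of S_1 ω, …, S_n ω
    (k : ℕ) (hk : (k : ℝ) = ⌈(1 - α) * (n + 1)⌉)
    (qhat : Ω → ℝ)
    (hqhat : ∀ ω, qhat ω =
        sInf {t : ℝ | k ≤ ((univ : Finset (Fin n)).filter
          (fun i => S i.castSucc ω ≤ t)).card}) :
    ENNReal.ofReal (1 - α) ≤ μ {ω | n < k ∨ S (Fin.last n) ω ≤ qhat ω} := by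
  rcases lt_or_ge n k with hnk | hkn
  · simpa [hnk] using hα.1.le
  set X : Ω → Fin (n + 1) → ℝ := fun ω i => S i ω
  have hX : Measurable X := measurable_pi_lambda _ hS
  have : IsProbabilityMeasure (μ.map X) := Measure.isProbabilityMeasure_map hX.aemeasurable
  have hν : ∀ σ : Equiv.Perm (Fin (n + 1)), (μ.map X).map (· ∘ σ) = μ.map X := fun σ => by
    rw [Measure.map_map (by fun_prop) hX]
    exact hexch σ
  have hcover : X ⁻¹' {v | strictRank v (Fin.last n) < k}
      ⊆ {ω | n < k ∨ S (Fin.last n) ω ≤ qhat ω} := fun ω hω =>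
    Or.inr ((hqhat ω).symm ▸ le_sInf_of_strictRank_last_lt (X ω) hkn hω)
  calc ENNReal.ofReal (1 - α) ≤ (k : ℝ≥0∞) / Fintype.card (Fin (n + 1)) := by
        simpa using ofReal_le_natCast_div_of_natCast_eq_ceil (m := n + 1) n.succ_pos
          (by exact_mod_cast hk)
    _ ≤ μ.map X {v | strictRank v (Fin.last n) < k} :=
      natCast_div_card_le_measure_strictRank_lt hν (by rw [Fintype.card_fin]; omega) _
    _ = μ (X ⁻¹' {v | strictRank v (Fin.last n) < k}) :=
      Measure.map_apply hX (measurable_strictRank _ measurableSet_Iio)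
    _ ≤ _ := measure_mono hcover
end

section
/- (Monotonicity of S ↦ η_{n+1}^S) In the dual problem max_{η ∈ [-α,1-α]^{n+1}} min_{g ∈ 𝓕} Σ_{i=1}^n η_i (S_i - g(a_i,x_i)) + η_{n+1}(S - g(a_{n+1},x_{n+1})) over a class 𝓕 of nonnegative functions, the optimal multiplier η_{n+1}^S is non-decreasing as a function of the imputed score S. -/
/-!
The imputed score enters the dual objective only through the term `η_{n+1} S`, and an infimum
commutes with adding a finite constant, so `D S' η = D S η + (S' - S) η_{n+1}`: passing from `S`
to `S'` tilts the objective towards larger last coordinates. If `η` were not a tied maximizer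
at `S'`, then `D S' η < D S' η' ≤ D S η + (S' - S) η'_{n+1}`, which forces `η_{n+1} < η'_{n+1}`;
if it is, the tie-breaking rule at `S'` gives the claim.
-/

theorem EReal.sInf_image_add_coe (s : Set EReal) (c : ℝ) :
    sInf ((· + (c : EReal)) '' s) = sInf s + c := by
  refine (Monotone.map_sInf_of_continuousAt ?_ (fun _ _ h => add_le_add_left h _)
    (EReal.top_add_coe c)).symm
  exact (EReal.continuousAt_add (Or.inr (EReal.coe_ne_bot c)) (Or.inr (EReal.coe_ne_top c))).comp
    (continuousAt_id.prodMk continuousAt_const)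

theorem EReal.sInf_setOf_coe_eq_add {ι : Type*} {A : Set ι} {f f' : ι → ℝ} {c : ℝ}
    (hf : ∀ g ∈ A, f' g = f g + c) :
    sInf {e : EReal | ∃ g ∈ A, e = (f' g : EReal)}
      = sInf {e : EReal | ∃ g ∈ A, e = (f g : EReal)} + c := by
  rw [← EReal.sInf_image_add_coe]
  congr 1
  ext e
  constructor
  · rintro ⟨g, hg, rfl⟩
    exact ⟨f g, ⟨g, hg, rfl⟩, by rw [hf g hg, EReal.coe_add]⟩
  · rintro ⟨_, ⟨g, hg, rfl⟩, rfl⟩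
    exact ⟨g, hg, by rw [hf g hg, EReal.coe_add]⟩

theorem IsMaxOn.le_of_isMaxOn_add_mul {ι : Type*} {K : Set ι} {D : ι → EReal} {φ : ι → ℝ}
    {c : ℝ} (hc : 0 ≤ c) {x x' : ι} (hx : IsMaxOn D K x) (hxK : x ∈ K)
    (hx' : IsMaxOn (fun y => D y + (c * φ y : ℝ)) K x') (hx'K : x' ∈ K)
    (htie : ∀ y ∈ K, D y + (c * φ y : ℝ) = D x' + (c * φ x' : ℝ) → φ y ≤ φ x') :
    φ x ≤ φ x' := by
  rcases (isMaxOn_iff.1 hx' x hxK).eq_or_lt with heq | hlt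
  · exact htie x hxK heq
  have hlt' : D x + (c * φ x : ℝ) < D x + (c * φ x' : ℝ) :=
    hlt.trans_le (add_le_add_left (isMaxOn_iff.1 hx x' hx'K) _)
  have hcoe : ((c * φ x : ℝ) : EReal) < (c * φ x' : ℝ) :=
    lt_of_not_ge fun h => hlt'.not_ge (add_le_add_right h _)
  exact (lt_of_mul_lt_mul_left (EReal.coe_lt_coe_iff.1 hcoe) hc).le

theorem dual_multiplier_monotone_general
    {Z : Type*} (F : Set (Z → ℝ))
    (n : ℕ) (z : Fin (n + 1) → Z) (Sc : Fin n → ℝ)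
    (α : ℝ)
    -- the dual objective for imputed score S and multipliers η
    (D : ℝ → (Fin (n + 1) → ℝ) → EReal)
    (hD : ∀ S η, D S η = sInf {e : EReal | ∃ g ∈ F,
        e = ((∑ i : Fin n, η i.castSucc * (Sc i - g (z i.castSucc)) +
              η (Fin.last n) * (S - g (z (Fin.last n))) : ℝ) : EReal)})
    (S S' : ℝ) (hSS' : S ≤ S')
    (η η' : Fin (n + 1) → ℝ)
    (hbox : ∀ i, η i ∈ Set.Icc (-α) (1 - α))
    (hbox' : ∀ i, η' i ∈ Set.Icc (-α) (1 - α))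
    -- η maximizes the dual at S, with maximal last coordinate among maximizers
    (hmax : ∀ η₂ : Fin (n + 1) → ℝ, (∀ i, η₂ i ∈ Set.Icc (-α) (1 - α)) → D S η₂ ≤ D S η)
    -- η' maximizes the dual at S', with maximal last coordinate among maximizers
    (hmax' : ∀ η₂ : Fin (n + 1) → ℝ, (∀ i, η₂ i ∈ Set.Icc (-α) (1 - α)) → D S' η₂ ≤ D S' η')
    (htie' : ∀ η₂ : Fin (n + 1) → ℝ, (∀ i, η₂ i ∈ Set.Icc (-α) (1 - α)) →
        D S' η₂ = D S' η' → η₂ (Fin.last n) ≤ η' (Fin.last n)) :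
    η (Fin.last n) ≤ η' (Fin.last n) := by
  have hshift : ∀ τ, D S' τ = D S τ + ((S' - S) * τ (Fin.last n) : ℝ) := fun τ => by
    rw [hD, hD]
    exact EReal.sInf_setOf_coe_eq_add fun g _ => by ring
  simp only [hshift] at hmax' htie'
  exact IsMaxOn.le_of_isMaxOn_add_mul
    (K := {τ : Fin (n + 1) → ℝ | ∀ i, τ i ∈ Set.Icc (-α) (1 - α)}) (sub_nonneg.2 hSS') (isMaxOn_iff.2 hmax) hbox (isMaxOn_iff.2 hmax') hbox' htie'

/-- Monotonicity of the optimal dual multiplier `η_{n+1}^S` in the imputed score `S`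
(Lemma of Gibbs et al.): choosing at each `S` a maximizer of the dual whose last
coordinate is maximal, the map `S ↦ η_{n+1}^S` is non-decreasing. -/
theorem dual_multiplier_monotone
    {Z : Type*} (F : Set (Z → ℝ)) (hFnn : ∀ g ∈ F, ∀ z, 0 ≤ g z)
    (n : ℕ) (z : Fin (n + 1) → Z) (Sc : Fin n → ℝ)
    (α : ℝ) (hα : α ∈ Set.Ioo (0:ℝ) 1)
    -- the dual objective for imputed score S and multipliers η
    (D : ℝ → (Fin (n + 1) → ℝ) → EReal)
    (hD : ∀ S η, D S η = sInf {e : EReal | ∃ g ∈ F,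
        e = ((∑ i : Fin n, η i.castSucc * (Sc i - g (z i.castSucc)) +
              η (Fin.last n) * (S - g (z (Fin.last n))) : ℝ) : EReal)})
    (S S' : ℝ) (hSS' : S ≤ S')
    (η η' : Fin (n + 1) → ℝ)
    (hbox : ∀ i, η i ∈ Set.Icc (-α) (1 - α))
    (hbox' : ∀ i, η' i ∈ Set.Icc (-α) (1 - α))
    -- η maximizes the dual at S, with maximal last coordinate among maximizers
    (hmax : ∀ η₂ : Fin (n + 1) → ℝ, (∀ i, η₂ i ∈ Set.Icc (-α) (1 - α)) → D S η₂ ≤ D S η)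
    (htie : ∀ η₂ : Fin (n + 1) → ℝ, (∀ i, η₂ i ∈ Set.Icc (-α) (1 - α)) →
        D S η₂ = D S η → η₂ (Fin.last n) ≤ η (Fin.last n))
    -- η' maximizes the dual at S', with maximal last coordinate among maximizers
    (hmax' : ∀ η₂ : Fin (n + 1) → ℝ, (∀ i, η₂ i ∈ Set.Icc (-α) (1 - α)) → D S' η₂ ≤ D S' η')
    (htie' : ∀ η₂ : Fin (n + 1) → ℝ, (∀ i, η₂ i ∈ Set.Icc (-α) (1 - α)) →
        D S' η₂ = D S' η' → η₂ (Fin.last n) ≤ η' (Fin.last n)) :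
    η (Fin.last n) ≤ η' (Fin.last n) :=
  dual_multiplier_monotone_general F n z Sc α D hD S S' hSS' η η' hbox hbox' hmax hmax' htie'
end
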